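/- Let E < E₀ and δ ∈ (0,1). There exists a constant C > 0, depending only on E, ρ₋, ρ₊ and δ, such that for every continuously differentiable ρ : [−1,1] → ℝ with ρ(−1) = ρ₋, ρ(1) = ρ₊ and δ ≤ ρ ≤ 1−δ, the straight path π̂_t := ρ̄_E + t(ρ − ρ̄_E), t ∈ [0,1], satisfies Î₁(π̂ | ρ̄_E) ≤ C (‖ρ − ρ̄_E‖_∞ + ‖ρ' − ρ̄_E'‖_∞)², where Î₁(π̂ | ρ̄_E) := sup_H Ĵ_H(π̂), the supremum being over all H : [0,1]×[−1,1] → ℝ which are C¹ in t, C² in u, and satisfy H_t(±1) = 0. -/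

import Mathlib

/-!
Along the straight path `π̂_t = ρ̄ + t (ρ - ρ̄)`, integrating by parts in `t` and then in `u`
(`H` vanishes at `u = ±1`, `π̂_t` takes the values `ρ₋, ρ₊` there, and `∫ ∂ᵤH_t = 0` absorbs the
constant `J`) turns `Ĵ_H(π̂)` into `∫₀¹ ∫ (c ∂ᵤH - ½ χ(π̂) (∂ᵤH)²)` with
`c = -∫₋₁ᵘ (ρ - ρ̄) + (t/2) (ρ' - ρ̄') + (E/2) (χ(ρ̄) - χ(π̂))`. The path stays in
`[min δ ρ₋, max (1-δ) ρ₊]`, where `χ ≥ c₀ > 0`, so completing the square bounds the integrand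
by `c² / (2 c₀) ≤ (2 + |E|)² (‖ρ - ρ̄‖∞ + ‖ρ' - ρ̄'‖∞)² / (2 c₀)`, uniformly in `H`.

The boundary value `ρ̄(1) = ρ₊` comes from the equation for `J`: it forces `E χ - J > 0` on
`[ρ₋, ρ₊]` (at a zero `1 / (E χ - J)` would not be integrable), and then
`∫ dr / (E χ(r) - J)` measures the time `ρ̄` needs to travel from `ρ₋`.
-/

open Real MeasureTheory Set Filter Topology Function

noncomputable section

/-- Mobility `χ(a) = a(1−a)`. -/
def chi (a : ℝ) : ℝ := a * (1 - a)

/-- Admissible test functions `H` for the dynamical rate functional on the time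
interval `[0,1]`: `C¹` in `t`, `C²` in `u`, vanishing at the spatial endpoints;
`Ht`, `H1`, `H2` are `∂_t H`, `∂_u H`, `∂_u² H`. -/
def admH (H Ht H1 H2 : ℝ → ℝ → ℝ) : Prop :=
  (∀ t ∈ Set.Icc (0:ℝ) 1, ∀ u ∈ Set.Icc (-1:ℝ) 1,
    HasDerivWithinAt (fun s => H s u) (Ht t u) (Set.Icc (0:ℝ) 1) t ∧
    HasDerivWithinAt (H t) (H1 t u) (Set.Icc (-1:ℝ) 1) u ∧
    HasDerivWithinAt (H1 t) (H2 t u) (Set.Icc (-1:ℝ) 1) u) ∧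
  ContinuousOn (Function.uncurry Ht) (Set.Icc (0:ℝ) 1 ×ˢ Set.Icc (-1:ℝ) 1) ∧
  ContinuousOn (Function.uncurry H2) (Set.Icc (0:ℝ) 1 ×ˢ Set.Icc (-1:ℝ) 1) ∧
  ∀ t ∈ Set.Icc (0:ℝ) 1, H t (-1) = 0 ∧ H t 1 = 0

/-- The functional `Ĵ_H(π)` (time horizon `1`, initial profile `ρb`). -/
def Jhat (ρm ρp E : ℝ) (ρb : ℝ → ℝ) (p H Ht H1 H2 : ℝ → ℝ → ℝ) : ℝ :=
  (∫ u in (-1:ℝ)..1, p 1 u * H 1 u) - (∫ u in (-1:ℝ)..1, ρb u * H 0 u)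
  - (∫ t in (0:ℝ)..1, ∫ u in (-1:ℝ)..1, p t u * Ht t u)
  - (1/2) * (∫ t in (0:ℝ)..1, ∫ u in (-1:ℝ)..1, p t u * H2 t u)
  + (ρp/2) * (∫ t in (0:ℝ)..1, H1 t 1)
  - (ρm/2) * (∫ t in (0:ℝ)..1, H1 t (-1))
  - (E/2) * (∫ t in (0:ℝ)..1, ∫ u in (-1:ℝ)..1, chi (p t u) * H1 t u)
  - (1/2) * (∫ t in (0:ℝ)..1, ∫ u in (-1:ℝ)..1, chi (p t u) * (H1 t u)^2)

/-- `Î₁(π | ρb) = sup_H Ĵ_H(π)` over admissible `H`. -/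
def Ihat (ρm ρp E : ℝ) (ρb : ℝ → ℝ) (p : ℝ → ℝ → ℝ) : ℝ :=
  sSup { x | ∃ H Ht H1 H2 : ℝ → ℝ → ℝ, admH H Ht H1 H2 ∧ x = Jhat ρm ρp E ρb p H Ht H1 H2 }

section RectangleCalculus

variable {a b c d : ℝ}

theorem integral_eq_sub_of_hasDerivWithinAt_Icc {f f' : ℝ → ℝ} {x : ℝ} (hcx : c ≤ x)
    (hxd : x ≤ d) (hf : ∀ y ∈ Icc c d, HasDerivWithinAt f (f' y) (Icc c d) y)
    (hf' : ContinuousOn f' (Icc c d)) :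
    ∫ y in c..x, f' y = f x - f c := by
  have hsub : Icc c x ⊆ Icc c d := Icc_subset_Icc le_rfl hxd
  refine intervalIntegral.integral_eq_sub_of_hasDerivAt_of_le hcx
    (fun y hy => (hf y (hsub hy)).continuousWithinAt.mono hsub) (fun y hy => ?_)
    ((hf'.mono hsub).intervalIntegrable_of_Icc hcx)
  exact (hf y (hsub (Ioo_subset_Icc_self hy))).hasDerivAt
    (Icc_mem_nhds hy.1 (hy.2.trans_le hxd))

theorem ContinuousOn.hasDerivWithinAt_primitive {g : ℝ → ℝ} (hg : ContinuousOn g (Icc c d))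
    {u : ℝ} (hu : u ∈ Icc c d) :
    HasDerivWithinAt (fun x => ∫ y in c..x, g y) (g u) (Icc c d) u := by
  have : Fact (u ∈ Icc c d) := ⟨hu⟩
  exact intervalIntegral.integral_hasDerivWithinAt_right
    ((hg.mono (Icc_subset_Icc le_rfl hu.2)).intervalIntegrable_of_Icc hu.1)
    (hg.stronglyMeasurableAtFilter_nhdsWithin measurableSet_Icc u) (hg u hu)

theorem ContinuousOn.continuous_uncurry_projIcc {F : ℝ → ℝ → ℝ} (hab : a ≤ b) (hcd : c ≤ d)
    (hF : ContinuousOn (uncurry F) (Icc a b ×ˢ Icc c d)) :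
    Continuous (uncurry fun t u => F (projIcc a b hab t) (projIcc c d hcd u)) :=
  hF.comp_continuous (f := fun q : ℝ × ℝ => ((projIcc a b hab q.1 : ℝ), (projIcc c d hcd q.2 : ℝ)))
    (by fun_prop) fun q => ⟨(projIcc a b hab q.1).2, (projIcc c d hcd q.2).2⟩

theorem ContinuousOn.uncurry_primitive {F : ℝ → ℝ → ℝ} (hab : a ≤ b) (hcd : c ≤ d)
    (hF : ContinuousOn (uncurry F) (Icc a b ×ˢ Icc c d)) :
    ContinuousOn (uncurry fun t u => ∫ v in c..u, F t v) (Icc a b ×ˢ Icc c d) := by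
  refine (intervalIntegral.continuous_parametric_primitive_of_continuous (μ := volume)
    (a₀ := c) (hF.continuous_uncurry_projIcc hab hcd)).continuousOn.congr
    fun q hq => intervalIntegral.integral_congr fun v hv => ?_
  rw [uIcc_of_le hq.2.1] at hv
  simp [projIcc_of_mem _ hq.1, projIcc_of_mem _ (⟨hv.1, hv.2.trans hq.2.2⟩ : v ∈ Icc c d)]

theorem ContinuousOn.intervalIntegral_uncurry {F : ℝ → ℝ → ℝ} (hab : a ≤ b) (hcd : c ≤ d)
    (hF : ContinuousOn (uncurry F) (Icc a b ×ˢ Icc c d)) :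
    ContinuousOn (fun t => ∫ u in c..d, F t u) (Icc a b) :=
  (hF.uncurry_primitive hab hcd).uncurry_right d (right_mem_Icc.2 hcd)

theorem intervalIntegral_integral_swap_of_continuousOn {F : ℝ → ℝ → ℝ} (hab : a ≤ b)
    (hcd : c ≤ d) (hF : ContinuousOn (uncurry F) (Icc a b ×ˢ Icc c d)) :
    ∫ t in a..b, ∫ u in c..d, F t u = ∫ u in c..d, ∫ t in a..b, F t u := by
  simp only [intervalIntegral.integral_of_le hab, intervalIntegral.integral_of_le hcd]
  refine integral_integral_swap ?_
  rw [Measure.prod_restrict]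
  exact (hF.integrableOn_compact (isCompact_Icc.prod isCompact_Icc)).mono_set
    (prod_mono Ioc_subset_Icc_self Ioc_subset_Icc_self)

theorem integral_sub_integral_eq_integral_integral {F Ft : ℝ → ℝ → ℝ} (hab : a ≤ b)
    (hcd : c ≤ d)
    (hF : ∀ t ∈ Icc a b, ∀ u ∈ Icc c d, HasDerivWithinAt (fun s => F s u) (Ft t u) (Icc a b) t)
    (hFt : ContinuousOn (uncurry Ft) (Icc a b ×ˢ Icc c d))
    (hFa : ContinuousOn (F a) (Icc c d)) (hFb : ContinuousOn (F b) (Icc c d)) :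
    (∫ u in c..d, F b u) - ∫ u in c..d, F a u = ∫ t in a..b, ∫ u in c..d, Ft t u := by
  rw [← intervalIntegral.integral_sub (hFb.intervalIntegrable_of_Icc hcd)
      (hFa.intervalIntegrable_of_Icc hcd),
    intervalIntegral_integral_swap_of_continuousOn hab hcd hFt]
  refine intervalIntegral.integral_congr fun u hu => ?_
  rw [uIcc_of_le hcd] at hu
  exact (integral_eq_sub_of_hasDerivWithinAt_Icc hab le_rfl (fun t ht => hF t ht u hu)
    (hFt.uncurry_right u hu)).symm

theorem continuousOn_uncurry_of_hasDerivWithinAt {F F' : ℝ → ℝ → ℝ} (hab : a ≤ b)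
    (hcd : c ≤ d) (hF : ∀ t ∈ Icc a b, ∀ u ∈ Icc c d, HasDerivWithinAt (F t) (F' t u) (Icc c d) u)
    (hF' : ContinuousOn (uncurry F') (Icc a b ×ˢ Icc c d))
    (hc : ContinuousOn (fun t => F t c) (Icc a b)) :
    ContinuousOn (uncurry F) (Icc a b ×ˢ Icc c d) := by
  refine ((hc.comp continuousOn_fst fun q hq => hq.1).add
    (hF'.uncurry_primitive hab hcd)).congr ?_
  rintro ⟨t, u⟩ ⟨ht, hu⟩
  simp [integral_eq_sub_of_hasDerivWithinAt_Icc hu.1 hu.2 (hF t ht) (hF'.uncurry_left t ht)]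

theorem continuousOn_deriv_left_of_eq_zero {F F₁ F₂ : ℝ → ℝ → ℝ} (hab : a ≤ b) (hcd : c < d)
    (hF : ∀ t ∈ Icc a b, ∀ u ∈ Icc c d, HasDerivWithinAt (F t) (F₁ t u) (Icc c d) u)
    (hF₁ : ∀ t ∈ Icc a b, ∀ u ∈ Icc c d, HasDerivWithinAt (F₁ t) (F₂ t u) (Icc c d) u)
    (hF₂ : ContinuousOn (uncurry F₂) (Icc a b ×ˢ Icc c d))
    (hc : ∀ t ∈ Icc a b, F t c = 0) (hd : ∀ t ∈ Icc a b, F t d = 0) :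
    ContinuousOn (fun t => F₁ t c) (Icc a b) := by
  have hprim := hF₂.uncurry_primitive hab hcd.le
  refine ((continuousOn_const (c := -(d - c)⁻¹)).mul
    (hprim.intervalIntegral_uncurry hab hcd.le)).congr fun t ht => ?_
  -- `∫ F₁ t = 0` and `F₁ t w = F₁ t c + ∫_c^w F₂ t` determine `F₁ t c`.
  have hF₁t : ∫ w in c..d, F₁ t w = ∫ w in c..d, (F₁ t c + ∫ v in c..w, F₂ t v) := by
    refine intervalIntegral.integral_congr fun w hw => ?_
    rw [uIcc_of_le hcd.le] at hw
    rw [integral_eq_sub_of_hasDerivWithinAt_Icc hw.1 hw.2 (hF₁ t ht) (hF₂.uncurry_left t ht)]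
    ring
  rw [integral_eq_sub_of_hasDerivWithinAt_Icc hcd.le le_rfl (hF t ht)
      fun u hu => (hF₁ t ht u hu).continuousWithinAt, hc t ht, hd t ht,
    intervalIntegral.integral_add intervalIntegrable_const
      ((hprim.uncurry_left t ht).intervalIntegrable_of_Icc hcd.le),
    intervalIntegral.integral_const, smul_eq_mul] at hF₁t
  simp only [Pi.mul_apply]
  field_simp [(sub_pos.2 hcd).ne']
  linarith

end RectangleCalculus

theorem intervalIntegral_le_of_forall_le {f : ℝ → ℝ} {a b C : ℝ} (hab : a ≤ b) (hC : 0 ≤ C)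
    (hf : ∀ x ∈ Icc a b, f x ≤ C) : ∫ x in a..b, f x ≤ (b - a) * C := by
  by_cases hi : IntervalIntegrable f volume a b
  · simpa using intervalIntegral.integral_mono_on hab hi intervalIntegrable_const hf
  · -- a non-integrable `f` has integral `0`
    rw [intervalIntegral.integral_undef hi]
    exact mul_nonneg (sub_nonneg.2 hab) hC

theorem mul_sub_half_mul_sq_le {c h w m : ℝ} (hm : 0 < m) (hw : m ≤ w) :
    c * h - 1/2 * (w * h ^ 2) ≤ c ^ 2 / (2 * m) := by
  rw [le_div_iff₀ (by positivity)]
  nlinarith [sq_nonneg (c - m * h), mul_nonneg hm.le (mul_nonneg (sub_nonneg.2 hw) (sq_nonneg h))]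

theorem chi_sub_chi (x y : ℝ) : chi x - chi y = (x - y) * (1 - x - y) := by
  unfold chi; ring

@[fun_prop]
theorem continuous_chi : Continuous chi := by
  unfold chi; fun_prop

theorem mul_le_chi_of_mem_Icc {m M x : ℝ} (hm : 0 ≤ m) (hM : M ≤ 1) (hx : x ∈ Icc m M) :
    m * (1 - M) ≤ chi x :=
  mul_le_mul hx.1 (by linarith [hx.2]) (by linarith) (hm.trans hx.1)

theorem not_intervalIntegrable_inv_mul_chi_sub {E J r a b : ℝ} (hE : E ≠ 0)
    (hr : E * chi r - J = 0) (hab : a ≠ b) (hr_mem : r ∈ uIcc a b) :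
    ¬IntervalIntegrable (fun x => (E * chi x - J)⁻¹) volume a b := by
  have hfactor : ∀ x, E * chi x - J = (x - r) * (E * (1 - x - r)) := fun x => by
    linear_combination E * chi_sub_chi x r + hr
  -- the only other zero of the quadratic is `1 - r`
  have hne : ∀ᶠ x in 𝓝[≠] r, x ≠ 1 - r := by
    by_cases h : 1 - r = r
    · filter_upwards [self_mem_nhdsWithin] with x hx
      rwa [h]
    · exact (eventually_ne_nhds (Ne.symm h)).filter_mono nhdsWithin_le_nhds
  have hO : (fun x => E * chi x - J) =O[𝓝[≠] r] fun x => x - r := by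
    have hbdd : (fun x : ℝ => E * (1 - x - r)) =O[𝓝[≠] r] fun _ => (1 : ℝ) :=
      ((Continuous.tendsto (by fun_prop) r).mono_left nhdsWithin_le_nhds).isBigO_one ℝ
    simpa [hfactor] using (Asymptotics.isBigO_refl (fun x : ℝ => x - r) (𝓝[≠] r)).mul hbdd
  refine not_intervalIntegrable_of_sub_inv_isBigO_punctured (hO.inv_rev ?_) hab hr_mem
  filter_upwards [hne] with x hx hzero
  rw [hfactor] at hzero
  rcases mul_eq_zero.1 hzero with h | h
  · exact h
  · exact absurd (by linarith [(mul_eq_zero.1 h).resolve_left hE]) hx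

theorem mul_chi_sub_pos_of_integral_inv_pos {E J a b : ℝ} (hab : a < b)
    (hint : 0 < ∫ r in a..b, (E * chi r - J)⁻¹) : ∀ r ∈ Icc a b, 0 < E * chi r - J := by
  have hf : Continuous fun r => E * chi r - J := by fun_prop
  by_contra! hneg
  obtain ⟨r₀, hr₀, hr₀_nonpos⟩ := hneg
  by_cases hsign : ∃ r₁ ∈ Icc a b, 0 < E * chi r₁ - J
  · obtain ⟨r₁, hr₁, hr₁_pos⟩ := hsign
    obtain ⟨r, hr, hr_zero⟩ := intermediate_value_uIcc hf.continuousOn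
      (mem_uIcc.2 (Or.inl ⟨hr₀_nonpos, hr₁_pos.le⟩) : (0 : ℝ) ∈ _)
    have hr_mem : r ∈ uIcc a b := by
      rw [uIcc_of_le hab.le]
      exact uIcc_subset_Icc hr₀ hr₁ hr
    suffices ∫ r in a..b, (E * chi r - J)⁻¹ = 0 by linarith
    by_cases hE : E = 0
    · simp [hE, show J = 0 by simpa [hE] using hr_zero]
    · exact intervalIntegral.integral_undef
        (not_intervalIntegrable_inv_mul_chi_sub hE hr_zero hab.ne hr_mem)
  · push Not at hsign
    have : 0 ≤ ∫ r in a..b, -(E * chi r - J)⁻¹ :=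
      intervalIntegral.integral_nonneg hab.le fun r hr => neg_nonneg.2 (inv_nonpos.2 (hsign r hr))
    rw [intervalIntegral.integral_neg] at this
    linarith

theorem eq_of_hasDerivWithinAt_of_integral_inv_eq {f y : ℝ → ℝ} {a b s₀ s₁ : ℝ}
    (hs : s₀ ≤ s₁) (hf : ContinuousOn f (Icc a b)) (hpos : ∀ r ∈ Icc a b, 0 < f r)
    (hy : ∀ s ∈ Icc s₀ s₁, HasDerivWithinAt y (f (y s)) (Icc s₀ s₁) s)
    (hmaps : MapsTo y (Icc s₀ s₁) (Icc a b)) (hy₀ : y s₀ = a)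
    (htime : ∫ r in a..b, (f r)⁻¹ = s₁ - s₀) : y s₁ = b := by
  have hab : a ≤ b := (hy₀ ▸ hmaps (left_mem_Icc.2 hs)).2
  set F : ℝ → ℝ := fun x => ∫ r in a..x, (f r)⁻¹
  have hinv : ContinuousOn (fun r => (f r)⁻¹) (Icc a b) :=
    hf.inv₀ fun r hr => (hpos r hr).ne'
  have hF : ∀ x ∈ Icc a b, HasDerivWithinAt F (f x)⁻¹ (Icc a b) x :=
    fun x hx => hinv.hasDerivWithinAt_primitive hx
  have hFmono : StrictMonoOn F (Icc a b) :=
    strictMonoOn_of_hasDerivWithinAt_pos (convex_Icc a b)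
      (fun x hx => (hF x hx).continuousWithinAt)
      (fun x hx => (hF x (interior_subset hx)).mono interior_subset)
      fun x hx => inv_pos.2 (hpos x (interior_subset hx))
  have hFy : ∀ s ∈ Icc s₀ s₁, HasDerivWithinAt (F ∘ y) 1 (Icc s₀ s₁) s := fun s hs' => by
    simpa [inv_mul_cancel₀ (hpos _ (hmaps hs')).ne'] using
      (hF (y s) (hmaps hs')).comp s (hy s hs') hmaps
  have hFy₁ : F (y s₁) = F b := by
    have := integral_eq_sub_of_hasDerivWithinAt_Icc hs le_rfl hFy continuousOn_const
    simp only [intervalIntegral.integral_const, smul_eq_mul, mul_one, comp_apply, hy₀] at this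
    have hFa : F a = 0 := intervalIntegral.integral_same
    have hFb : F b = s₁ - s₀ := htime
    linarith
  exact hFmono.injOn (hmaps (right_mem_Icc.2 hs)) (right_mem_Icc.2 hab) hFy₁

theorem admH.continuousOn_uncurry_H1 {H Ht H1 H2 : ℝ → ℝ → ℝ} (hH : admH H Ht H1 H2) :
    ContinuousOn (uncurry H1) (Icc 0 1 ×ˢ Icc (-1) 1) :=
  continuousOn_uncurry_of_hasDerivWithinAt zero_le_one (by norm_num)
    (fun t ht u hu => (hH.1 t ht u hu).2.2) hH.2.2.1
    (continuousOn_deriv_left_of_eq_zero zero_le_one (by norm_num)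
      (fun t ht u hu => (hH.1 t ht u hu).2.1) (fun t ht u hu => (hH.1 t ht u hu).2.2) hH.2.2.1
      (fun t ht => (hH.2.2.2 t ht).1) fun t ht => (hH.2.2.2 t ht).2)

theorem admH.continuousOn_uncurry_H {H Ht H1 H2 : ℝ → ℝ → ℝ} (hH : admH H Ht H1 H2) :
    ContinuousOn (uncurry H) (Icc 0 1 ×ˢ Icc (-1) 1) :=
  continuousOn_uncurry_of_hasDerivWithinAt zero_le_one (by norm_num)
    (fun t ht u hu => (hH.1 t ht u hu).2.1) hH.continuousOn_uncurry_H1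
    (continuousOn_const.congr fun t ht => (hH.2.2.2 t ht).1)

theorem Jhat_eq_integral {ρm ρp E : ℝ} {ρb : ℝ → ℝ} {p v H Ht H1 H2 : ℝ → ℝ → ℝ}
    (hH : admH H Ht H1 H2)
    (hp : ∀ t ∈ Icc (0:ℝ) 1, ∀ u ∈ Icc (-1:ℝ) 1,
      HasDerivWithinAt (fun s => p s u) (v t u) (Icc 0 1) t)
    (hpc : ContinuousOn (uncurry p) (Icc 0 1 ×ˢ Icc (-1) 1))
    (hvc : ContinuousOn (uncurry v) (Icc 0 1 ×ˢ Icc (-1) 1))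
    (hp₀ : ∀ u ∈ Icc (-1:ℝ) 1, p 0 u = ρb u) :
    Jhat ρm ρp E ρb p H Ht H1 H2 = ∫ t in (0:ℝ)..1, ((∫ u in (-1:ℝ)..1, v t u * H t u)
        - (1/2) * (∫ u in (-1:ℝ)..1, p t u * H2 t u)
        + (ρp/2) * H1 t 1 - (ρm/2) * H1 t (-1)
        - (E/2) * (∫ u in (-1:ℝ)..1, chi (p t u) * H1 t u)
        - (1/2) * (∫ u in (-1:ℝ)..1, chi (p t u) * (H1 t u)^2)) := by
  have h0 : (0:ℝ) ∈ Icc (0:ℝ) 1 := left_mem_Icc.2 zero_le_one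
  have h1 : (1:ℝ) ∈ Icc (0:ℝ) 1 := right_mem_Icc.2 zero_le_one
  have hHc := hH.continuousOn_uncurry_H
  have hH1c := hH.continuousOn_uncurry_H1
  have hslice : ∀ F : ℝ → ℝ → ℝ, ContinuousOn (uncurry F) (Icc 0 1 ×ˢ Icc (-1) 1) →
      ∀ t ∈ Icc (0:ℝ) 1, IntervalIntegrable (F t) volume (-1) 1 := fun F hF t ht =>
    (hF.uncurry_left t ht).intervalIntegrable_of_Icc (by norm_num)
  have hmarg : ∀ F : ℝ → ℝ → ℝ, ContinuousOn (uncurry F) (Icc 0 1 ×ˢ Icc (-1) 1) →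
      IntervalIntegrable (fun t => ∫ u in (-1:ℝ)..1, F t u) volume 0 1 := fun F hF =>
    (hF.intervalIntegral_uncurry zero_le_one (by norm_num)).intervalIntegrable_of_Icc zero_le_one
  have hH2c : ContinuousOn (uncurry H2) (Icc 0 1 ×ˢ Icc (-1) 1) := hH.2.2.1
  have hvH : ContinuousOn (uncurry fun t u => v t u * H t u) (Icc 0 1 ×ˢ Icc (-1) 1) := by
    fun_prop
  have hpHt : ContinuousOn (uncurry fun t u => p t u * Ht t u) (Icc 0 1 ×ˢ Icc (-1) 1) := by
    have := hH.2.1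
    fun_prop
  have htime := integral_sub_integral_eq_integral_integral (F := fun t u => p t u * H t u)
    zero_le_one (by norm_num) (fun t ht u hu => (hp t ht u hu).mul (hH.1 t ht u hu).1)
    (hvH.add hpHt) ((hpc.uncurry_left 0 h0).mul (hHc.uncurry_left 0 h0))
    ((hpc.uncurry_left 1 h1).mul (hHc.uncurry_left 1 h1))
  have hsplit : ∫ t in (0:ℝ)..1, ∫ u in (-1:ℝ)..1, (v t u * H t u + p t u * Ht t u)
      = (∫ t in (0:ℝ)..1, ∫ u in (-1:ℝ)..1, v t u * H t u)
        + ∫ t in (0:ℝ)..1, ∫ u in (-1:ℝ)..1, p t u * Ht t u := by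
    rw [← intervalIntegral.integral_add (hmarg _ hvH) (hmarg _ hpHt)]
    refine intervalIntegral.integral_congr fun t ht => ?_
    rw [uIcc_of_le zero_le_one] at ht
    exact intervalIntegral.integral_add (hslice _ hvH t ht) (hslice _ hpHt t ht)
  have hinit : ∫ u in (-1:ℝ)..1, p 0 u * H 0 u = ∫ u in (-1:ℝ)..1, ρb u * H 0 u := by
    refine intervalIntegral.integral_congr fun u hu => ?_
    rw [uIcc_of_le (by norm_num)] at hu
    simp only [hp₀ u hu]
  have i₁ := hmarg _ hvH
  have i₂ := (hmarg (fun t u => p t u * H2 t u) (by fun_prop)).const_mul (1/2)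
  have i₃ := ((hH1c.uncurry_right 1 (by norm_num)).intervalIntegrable_of_Icc (μ := volume)
    zero_le_one).const_mul (ρp/2)
  have i₄ := ((hH1c.uncurry_right (-1) (by norm_num)).intervalIntegrable_of_Icc (μ := volume)
    zero_le_one).const_mul (ρm/2)
  have i₅ := (hmarg (fun t u => chi (p t u) * H1 t u) (by fun_prop)).const_mul (E/2)
  have i₆ := (hmarg (fun t u => chi (p t u) * H1 t u ^ 2) (by fun_prop)).const_mul (1/2)
  rw [Jhat, intervalIntegral.integral_sub ((((i₁.sub i₂).add i₃).sub i₄).sub i₅) i₆,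
    intervalIntegral.integral_sub (((i₁.sub i₂).add i₃).sub i₄) i₅,
    intervalIntegral.integral_sub ((i₁.sub i₂).add i₃) i₄,
    intervalIntegral.integral_add (i₁.sub i₂) i₃, intervalIntegral.integral_sub i₁ i₂]
  simp only [intervalIntegral.integral_const_mul]
  linarith

theorem spatial_terms_eq_integral {ρm ρp E κ : ℝ} {q q' g h h₁ h₂ : ℝ → ℝ}
    (hq : ∀ u ∈ Icc (-1:ℝ) 1, HasDerivWithinAt q (q' u) (Icc (-1) 1) u)
    (hq' : ContinuousOn q' (Icc (-1) 1)) (hq_left : q (-1) = ρm) (hq_right : q 1 = ρp)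
    (hg : ContinuousOn g (Icc (-1) 1))
    (hh : ∀ u ∈ Icc (-1:ℝ) 1, HasDerivWithinAt h (h₁ u) (Icc (-1) 1) u)
    (hh₁ : ∀ u ∈ Icc (-1:ℝ) 1, HasDerivWithinAt h₁ (h₂ u) (Icc (-1) 1) u)
    (hh₂ : ContinuousOn h₂ (Icc (-1) 1)) (hh_left : h (-1) = 0) (hh_right : h 1 = 0) :
    (∫ u in (-1:ℝ)..1, g u * h u) - (1/2) * (∫ u in (-1:ℝ)..1, q u * h₂ u)
        + (ρp/2) * h₁ 1 - (ρm/2) * h₁ (-1)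
        - (E/2) * (∫ u in (-1:ℝ)..1, chi (q u) * h₁ u)
        - (1/2) * (∫ u in (-1:ℝ)..1, chi (q u) * (h₁ u)^2)
      = ∫ u in (-1:ℝ)..1, ((q' u / 2 - (∫ v in (-1:ℝ)..u, g v) - E/2 * chi (q u) + κ) * h₁ u
          - 1/2 * (chi (q u) * (h₁ u)^2)) := by
  have hI : uIcc (-1:ℝ) 1 = Icc (-1) 1 := uIcc_of_le (by norm_num)
  set G : ℝ → ℝ := fun u => ∫ v in (-1:ℝ)..u, g v
  have hG : ∀ u ∈ Icc (-1:ℝ) 1, HasDerivWithinAt G (g u) (Icc (-1) 1) u :=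
    fun u hu => hg.hasDerivWithinAt_primitive hu
  have hqc : ContinuousOn q (Icc (-1) 1) := fun u hu => (hq u hu).continuousWithinAt
  have hGc : ContinuousOn G (Icc (-1) 1) := fun u hu => (hG u hu).continuousWithinAt
  have hh₁c : ContinuousOn h₁ (Icc (-1) 1) := fun u hu => (hh₁ u hu).continuousWithinAt
  have hii : ∀ f : ℝ → ℝ, ContinuousOn f (Icc (-1) 1) → IntervalIntegrable f volume (-1) 1 :=
    fun f hf => hf.intervalIntegrable_of_Icc (by norm_num)
  have hgh : ∫ u in (-1:ℝ)..1, g u * h u = -∫ u in (-1:ℝ)..1, G u * h₁ u := by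
    have := intervalIntegral.integral_mul_deriv_eq_deriv_mul_of_hasDerivWithinAt
      (hI ▸ hG) (hI ▸ hh) (hii g hg) (hii h₁ hh₁c)
    simp only [hh_left, hh_right, mul_zero, sub_zero] at this
    linarith
  have hqh : ∫ u in (-1:ℝ)..1, q u * h₂ u
      = ρp * h₁ 1 - ρm * h₁ (-1) - ∫ u in (-1:ℝ)..1, q' u * h₁ u := by
    rw [intervalIntegral.integral_mul_deriv_eq_deriv_mul_of_hasDerivWithinAt
      (hI ▸ hq) (hI ▸ hh₁) (hii q' hq') (hii h₂ hh₂), hq_left, hq_right]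
  have hh₁0 : ∫ u in (-1:ℝ)..1, h₁ u = 0 := by
    rw [integral_eq_sub_of_hasDerivWithinAt_Icc (by norm_num) le_rfl hh hh₁c, hh_left, hh_right,
      sub_zero]
  have hχ : ContinuousOn (fun u => chi (q u)) (Icc (-1) 1) := continuous_chi.comp_continuousOn hqc
  have i₁ := (hii (fun u => q' u * h₁ u) (hq'.mul hh₁c)).const_mul (1/2)
  have i₂ := hii (fun u => G u * h₁ u) (hGc.mul hh₁c)
  have i₃ := (hii (fun u => chi (q u) * h₁ u) (hχ.mul hh₁c)).const_mul (E/2)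
  have i₄ := (hii _ hh₁c).const_mul κ
  have i₅ := (hii (fun u => chi (q u) * h₁ u ^ 2) (by fun_prop)).const_mul (1/2)
  have hsplit : ∫ u in (-1:ℝ)..1, ((q' u / 2 - G u - E/2 * chi (q u) + κ) * h₁ u
        - 1/2 * (chi (q u) * (h₁ u)^2))
      = ∫ u in (-1:ℝ)..1, (1/2 * (q' u * h₁ u) - G u * h₁ u - E/2 * (chi (q u) * h₁ u)
        + κ * h₁ u - 1/2 * (chi (q u) * (h₁ u)^2)) :=
    intervalIntegral.integral_congr fun u _ => by ring
  rw [hsplit, intervalIntegral.integral_sub (((i₁.sub i₂).sub i₃).add i₄) i₅,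
    intervalIntegral.integral_add ((i₁.sub i₂).sub i₃) i₄,
    intervalIntegral.integral_sub (i₁.sub i₂) i₃, intervalIntegral.integral_sub i₁ i₂]
  simp only [intervalIntegral.integral_const_mul, hh₁0]
  rw [hgh, hqh]
  ring

def linePath (ρ₀ ρ₁ : ℝ → ℝ) (t u : ℝ) : ℝ := ρ₀ u + t * (ρ₁ u - ρ₀ u)

theorem linePath_mem_Icc {ρ₀ ρ₁ : ℝ → ℝ} {m M t u : ℝ} (ht : t ∈ Icc (0:ℝ) 1)
    (h₀ : ρ₀ u ∈ Icc m M) (h₁ : ρ₁ u ∈ Icc m M) : linePath ρ₀ ρ₁ t u ∈ Icc m M := by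
  simpa [linePath] using (convex_Icc m M).add_smul_sub_mem h₀ h₁ ht

section LinePath

variable {ρm ρp E J m M X₁ X₂ : ℝ} {ρb ρ dρ : ℝ → ℝ}

theorem abs_linePath_coeff_le {t u : ℝ} (ht : t ∈ Icc (0:ℝ) 1) (hu : u ∈ Icc (-1:ℝ) 1)
    (hm : 0 ≤ m) (hM : M ≤ 1)
    (hρb_mem : ∀ u ∈ Icc (-1:ℝ) 1, ρb u ∈ Icc m M) (hρ_mem : ∀ u ∈ Icc (-1:ℝ) 1, ρ u ∈ Icc m M)
    (hX₁ : ∀ u ∈ Icc (-1:ℝ) 1, |ρ u - ρb u| ≤ X₁)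
    (hX₂ : ∀ u ∈ Icc (-1:ℝ) 1, |dρ u - (E * chi (ρb u) - J)| ≤ X₂) :
    |(E * chi (ρb u) - J + t * (dρ u - (E * chi (ρb u) - J))) / 2
        - (∫ v in (-1:ℝ)..u, (ρ v - ρb v)) - E/2 * chi (linePath ρb ρ t u) + J/2|
      ≤ (2 + |E|) * (X₁ + X₂) := by
  have hX₁0 : 0 ≤ X₁ := (abs_nonneg _).trans (hX₁ u hu)
  have hX₂0 : 0 ≤ X₂ := (abs_nonneg _).trans (hX₂ u hu)
  have hG : |∫ v in (-1:ℝ)..u, (ρ v - ρb v)| ≤ 2 * X₁ := by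
    have := intervalIntegral.norm_integral_le_of_norm_le_const (a := -1) (b := u)
      (f := fun v => ρ v - ρb v) fun v hv => hX₁ v (uIoc_subset_uIcc.trans
        (uIcc_subset_Icc (left_mem_Icc.2 (by norm_num)) hu) hv)
    rw [Real.norm_eq_abs, abs_of_nonneg (by linarith [hu.1] : 0 ≤ u - -1)] at this
    nlinarith [hu.2]
  have hp := linePath_mem_Icc ht (hρb_mem u hu) (hρ_mem u hu)
  have hχ : |chi (ρb u) - chi (linePath ρb ρ t u)| ≤ X₁ := by
    rw [chi_sub_chi, abs_mul,
      show ρb u - linePath ρb ρ t u = -(t * (ρ u - ρb u)) by simp only [linePath]; ring,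
      abs_neg, abs_mul, abs_of_nonneg ht.1]
    have h1 : |1 - ρb u - linePath ρb ρ t u| ≤ 1 := by
      rw [abs_le]
      constructor <;> linarith [hp.1, hp.2, (hρb_mem u hu).1, (hρb_mem u hu).2]
    calc t * |ρ u - ρb u| * |1 - ρb u - linePath ρb ρ t u| ≤ 1 * X₁ * 1 := by
          gcongr
          exacts [ht.2, hX₁ u hu]
      _ = X₁ := by ring
  calc _ = |-(∫ v in (-1:ℝ)..u, (ρ v - ρb v)) + t / 2 * (dρ u - (E * chi (ρb u) - J))
          + E / 2 * (chi (ρb u) - chi (linePath ρb ρ t u))| := by ring_nf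
    _ ≤ |∫ v in (-1:ℝ)..u, (ρ v - ρb v)| + t / 2 * |dρ u - (E * chi (ρb u) - J)|
          + |E| / 2 * |chi (ρb u) - chi (linePath ρb ρ t u)| := by
        refine (abs_add_three _ _ _).trans_eq ?_
        rw [abs_neg, abs_mul, abs_mul, abs_div, abs_div, abs_two, abs_of_nonneg ht.1]
    _ ≤ 2 * X₁ + 1 / 2 * X₂ + |E| / 2 * X₁ := by
        gcongr
        exacts [ht.2, hX₂ u hu]
    _ ≤ (2 + |E|) * (X₁ + X₂) := by
        nlinarith [mul_nonneg (abs_nonneg E) hX₁0, mul_nonneg (abs_nonneg E) hX₂0]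

theorem Jhat_linePath_le {H Ht H1 H2 : ℝ → ℝ → ℝ} (hm : 0 < m) (hM : M < 1)
    (hρb_left : ρb (-1) = ρm) (hρb_right : ρb 1 = ρp)
    (hρb : ∀ u ∈ Icc (-1:ℝ) 1, HasDerivWithinAt ρb (E * chi (ρb u) - J) (Icc (-1:ℝ) 1) u)
    (hρ : ∀ u ∈ Icc (-1:ℝ) 1, HasDerivWithinAt ρ (dρ u) (Icc (-1:ℝ) 1) u)
    (hdρ : ContinuousOn dρ (Icc (-1:ℝ) 1)) (hρ_left : ρ (-1) = ρm) (hρ_right : ρ 1 = ρp)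
    (hρb_mem : ∀ u ∈ Icc (-1:ℝ) 1, ρb u ∈ Icc m M) (hρ_mem : ∀ u ∈ Icc (-1:ℝ) 1, ρ u ∈ Icc m M)
    (hX₁ : ∀ u ∈ Icc (-1:ℝ) 1, |ρ u - ρb u| ≤ X₁)
    (hX₂ : ∀ u ∈ Icc (-1:ℝ) 1, |dρ u - (E * chi (ρb u) - J)| ≤ X₂)
    (hH : admH H Ht H1 H2) :
    Jhat ρm ρp E ρb (linePath ρb ρ) H Ht H1 H2
      ≤ (2 + |E|) ^ 2 / (m * (1 - M)) * (X₁ + X₂) ^ 2 := by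
  have hc₀ : 0 < m * (1 - M) := mul_pos hm (sub_pos.2 hM)
  have hρbc : ContinuousOn ρb (Icc (-1) 1) := fun u hu => (hρb u hu).continuousWithinAt
  have hρc : ContinuousOn ρ (Icc (-1) 1) := fun u hu => (hρ u hu).continuousWithinAt
  have hρb₂ : ContinuousOn (fun q : ℝ × ℝ => ρb q.2) (Icc 0 1 ×ˢ Icc (-1) 1) :=
    hρbc.comp continuousOn_snd fun q hq => hq.2
  have hρ₂ : ContinuousOn (fun q : ℝ × ℝ => ρ q.2) (Icc 0 1 ×ˢ Icc (-1) 1) :=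
    hρc.comp continuousOn_snd fun q hq => hq.2
  rw [Jhat_eq_integral (p := linePath ρb ρ) (v := fun _ u => ρ u - ρb u) hH
    (fun t _ u _ => by simpa [linePath] using
      (((hasDerivAt_id t).mul_const (ρ u - ρb u)).const_add (ρb u)).hasDerivWithinAt)
    (hρb₂.add (continuousOn_fst.mul (hρ₂.sub hρb₂))) (hρ₂.sub hρb₂)
    fun u _ => by simp [linePath]]
  refine (intervalIntegral_le_of_forall_le (C := (2 + |E|) ^ 2 * (X₁ + X₂) ^ 2 / (m * (1 - M)))
    zero_le_one (by positivity) fun t ht => ?_).trans_eq (by ring)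
  rw [spatial_terms_eq_integral (κ := J/2) (q := linePath ρb ρ t) (g := fun u => ρ u - ρb u)
    (q' := fun u => E * chi (ρb u) - J + t * (dρ u - (E * chi (ρb u) - J)))
    (fun u hu => (hρb u hu).add (((hρ u hu).sub (hρb u hu)).const_mul t)) (by fun_prop)
    (by simp [linePath, hρb_left, hρ_left]) (by simp [linePath, hρb_right, hρ_right])
    (hρc.sub hρbc) (fun u hu => (hH.1 t ht u hu).2.1) (fun u hu => (hH.1 t ht u hu).2.2)
    (hH.2.2.1.uncurry_left t ht) (hH.2.2.2 t ht).1 (hH.2.2.2 t ht).2]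
  refine (intervalIntegral_le_of_forall_le
    (C := ((2 + |E|) * (X₁ + X₂)) ^ 2 / (2 * (m * (1 - M)))) (by norm_num) (by positivity)
    fun u hu => ?_).trans_eq (by field_simp; ring)
  refine (mul_sub_half_mul_sq_le hc₀ (mul_le_chi_of_mem_Icc hm.le hM.le
    (linePath_mem_Icc ht (hρb_mem u hu) (hρ_mem u hu)))).trans ?_
  have hc := abs_le.1 (abs_linePath_coeff_le ht hu hm.le hM.le hρb_mem hρ_mem hX₁ hX₂)
  exact div_le_div_of_nonneg_right (sq_le_sq' hc.1 hc.2) (by positivity)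

end LinePath

theorem stmt16_general (ρm ρp : ℝ)
    (h0 : 0 < ρm) (h1 : ρm < ρp) (h2 : ρp < 1)
    (E J δ : ℝ) (hδ0 : 0 < δ)
    (hJeq : (1/2) * (∫ r in ρm..ρp, (E * chi r - J)⁻¹) = 1)
    (ρb : ℝ → ℝ) (hρb0 : ρb (-1) = ρm)
    (hρbode : ∀ u ∈ Set.Icc (-1:ℝ) 1,
      HasDerivWithinAt ρb (E * chi (ρb u) - J) (Set.Icc (-1:ℝ) 1) u)
    (hρbrange : ∀ u ∈ Set.Icc (-1:ℝ) 1, ρb u ∈ Set.Icc ρm ρp) :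
    ∃ C > (0:ℝ), ∀ ρ dρ : ℝ → ℝ,
      (∀ u ∈ Set.Icc (-1:ℝ) 1, HasDerivWithinAt ρ (dρ u) (Set.Icc (-1:ℝ) 1) u) →
      ContinuousOn dρ (Set.Icc (-1:ℝ) 1) →
      ρ (-1) = ρm → ρ 1 = ρp →
      (∀ u ∈ Set.Icc (-1:ℝ) 1, δ ≤ ρ u ∧ ρ u ≤ 1 - δ) →
      Ihat ρm ρp E ρb (fun t u => ρb u + t * (ρ u - ρb u)) ≤
        C * (sSup ((fun u => |ρ u - ρb u|) '' Set.Icc (-1:ℝ) 1)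
            + sSup ((fun u => |dρ u - (E * chi (ρb u) - J)|) '' Set.Icc (-1:ℝ) 1))^2 := by
  have htime : ∫ r in ρm..ρp, (E * chi r - J)⁻¹ = 1 - (-1) := by linarith
  have hflux := mul_chi_sub_pos_of_integral_inv_pos h1 (by rw [htime]; norm_num)
  have hρb1 : ρb 1 = ρp := eq_of_hasDerivWithinAt_of_integral_inv_eq (by norm_num)
    (by fun_prop) hflux hρbode hρbrange hρb0 htime
  have hm : 0 < min δ ρm := lt_min hδ0 h0
  have hM : max (1 - δ) ρp < 1 := max_lt (by linarith) h2
  refine ⟨(2 + |E|) ^ 2 / (min δ ρm * (1 - max (1 - δ) ρp)),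
    div_pos (by positivity) (mul_pos hm (by linarith)), fun ρ dρ hρ hdρ hρ1 hρ2 hρδ => ?_⟩
  have hρbc : ContinuousOn ρb (Icc (-1) 1) := fun u hu => (hρbode u hu).continuousWithinAt
  have hρc : ContinuousOn ρ (Icc (-1) 1) := fun u hu => (hρ u hu).continuousWithinAt
  refine Real.sSup_le ?_ (by positivity)
  rintro _ ⟨H, Ht, H1, H2, hH, rfl⟩
  exact Jhat_linePath_le hm hM hρb0 hρb1 hρbode hρ hdρ hρ1 hρ2
    (fun u hu => ⟨min_le_right _ _ |>.trans (hρbrange u hu).1,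
      (hρbrange u hu).2.trans (le_max_right _ _)⟩)
    (fun u hu => ⟨min_le_left _ _ |>.trans (hρδ u hu).1, (hρδ u hu).2.trans (le_max_left _ _)⟩)
    (fun u hu => le_csSup (isCompact_Icc.bddAbove_image (by fun_prop)) (mem_image_of_mem _ hu))
    (fun u hu => le_csSup (isCompact_Icc.bddAbove_image (by fun_prop)) (mem_image_of_mem _ hu))
    hH

/-- Profiles close to `ρ̄_E` in `C¹` can be reached at small cost along the straight
path: `Î₁(π̂ | ρ̄_E) ≤ C ‖ρ − ρ̄_E‖²_{C¹}`. -/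
theorem stmt16 (ρm ρp φm φp E0 : ℝ)
    (h0 : 0 < ρm) (h1 : ρm < ρp) (h2 : ρp < 1)
    (hφm : φm = Real.log (ρm / (1 - ρm))) (hφp : φp = Real.log (ρp / (1 - ρp)))
    (hE0 : E0 = (φp - φm) / 2) (E J δ : ℝ) (hE : E < E0) (hδ0 : 0 < δ) (hδ1 : δ < 1)
    (hJneg : J ≤ 0) (hJeq : (1/2) * (∫ r in ρm..ρp, (E * chi r - J)⁻¹) = 1)
    (ρb : ℝ → ℝ) (hρb0 : ρb (-1) = ρm)
    (hρbode : ∀ u ∈ Set.Icc (-1:ℝ) 1,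
      HasDerivWithinAt ρb (E * chi (ρb u) - J) (Set.Icc (-1:ℝ) 1) u)
    (hρbrange : ∀ u ∈ Set.Icc (-1:ℝ) 1, ρb u ∈ Set.Icc ρm ρp) :
    ∃ C > (0:ℝ), ∀ ρ dρ : ℝ → ℝ,
      (∀ u ∈ Set.Icc (-1:ℝ) 1, HasDerivWithinAt ρ (dρ u) (Set.Icc (-1:ℝ) 1) u) →
      ContinuousOn dρ (Set.Icc (-1:ℝ) 1) →
      ρ (-1) = ρm → ρ 1 = ρp →
      (∀ u ∈ Set.Icc (-1:ℝ) 1, δ ≤ ρ u ∧ ρ u ≤ 1 - δ) →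
      Ihat ρm ρp E ρb (fun t u => ρb u + t * (ρ u - ρb u)) ≤
        C * (sSup ((fun u => |ρ u - ρb u|) '' Set.Icc (-1:ℝ) 1)
            + sSup ((fun u => |dρ u - (E * chi (ρb u) - J)|) '' Set.Icc (-1:ℝ) 1))^2 :=
  stmt16_general ρm ρp h0 h1 h2 E J δ hδ0 hJeq ρb hρb0 hρbode hρbrange
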